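/- arXiv:2305.00137 — 6 statements merged into one kernel-verified Lean document; each statement's English description precedes it below -/
import Mathlib

section
/- Let m₁, m₂ ≥ 0 and let H_{i,j} for 0 ≤ i ≤ m₁, 0 ≤ j ≤ m₂ be matrices with entries in the set of single-qubit Pauli symbols {I, X, Y, Z, 0} of size r × n. Suppose for all 0 ≤ d₁ ≤ m₁ and 0 ≤ d₂ ≤ m₂: Σ_{i=0}^{m₁-d₁} Σ_{j=0}^{m₂-d₂} ⟨H_{i,j}, H_{i+d₁,j+d₂}⟩_s = 0 and Σ_{i=0}^{m₁-d₁} Σ_{j=0}^{m₂-d₂} ⟨H_{i+d₁,j}, H_{i,j+d₂}⟩_s = 0 (as r×r matrices over F₂). Then for any coupling lengths L₁ > m₁ and L₂ > m₂, every pair of rows of the tail-biting 2D spatially-coupled parity check matrix built from the H_{i,j} has vanishing symplectic inner product, i.e., all stabilizer generators pairwise commute. -/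
open Matrix Finset

/-- Symplectic inner product of Pauli-symbol matrices (Pauli symbols identified with `F₂²`,
`0 ↦ (0,0)`): the `(i,j)` entry is `Σ_k ⟨P_{i,k}, Q_{j,k}⟩_s`. -/
def sympMat {r₁ r₂ n : ℕ} (P : Matrix (Fin r₁) (Fin n) (ZMod 2 × ZMod 2))
    (Q : Matrix (Fin r₂) (Fin n) (ZMod 2 × ZMod 2)) : Matrix (Fin r₁) (Fin r₂) (ZMod 2) :=
  fun i j => ∑ k, ((P i k).1 * (Q j k).2 + (P i k).2 * (Q j k).1)

/-- The block of the tail-biting 2D spatially-coupled parity check matrix at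
row-block `t` and column-block `s`: it is `H i j` when `t = s + (i,j) (mod (L₁,L₂))`. -/
def Hfull (m₁ m₂ : ℕ) {r n : ℕ} (L₁ L₂ : ℕ) [NeZero L₁] [NeZero L₂]
    (H : ℕ → ℕ → Matrix (Fin r) (Fin n) (ZMod 2 × ZMod 2))
    (t s : ZMod L₁ × ZMod L₂) : Matrix (Fin r) (Fin n) (ZMod 2 × ZMod 2) :=
  ∑ i ∈ Finset.range (m₁ + 1), ∑ j ∈ Finset.range (m₂ + 1),
    if t.1 = s.1 + (i : ZMod L₁) ∧ t.2 = s.2 + (j : ZMod L₂) then H i j else 0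


/-!
Extend the blocks by zero outside the box `[0, m₁] × [0, m₂]` to `B`. The block of the coupled
matrix at `(t, s)` is `B (t - s)`, so the product of row blocks `t` and `t'` is the cyclic
correlation `∑ u, ⟨B u, B (u + a)⟩_s` with `a = t' - t`. Because `m < L` in each coordinate, a
pair of box indices `(u, u + a)` either does not wrap around, `(u + a).val = u.val + a.val`, or
wraps once, `u.val = (u + a).val + (L - a.val)`, independently in the two coordinates. The four
resulting sums are the two hypotheses and their transposes (`⟨P, Q⟩_sᵀ = ⟨Q, P⟩_s`).
-/

section ShiftSum

variable {M : Type*} [AddCommMonoid M]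

-- `m - d` is truncated: for `m < d` the sum is the single term `F 0 d`, not empty.
def shiftSum (m d : ℕ) (F : ℕ → ℕ → M) : M :=
  ∑ x ∈ range (m - d + 1), F x (x + d)

def shiftSum₂ (m₁ m₂ d₁ d₂ : ℕ) (G : ℕ → ℕ → ℕ → ℕ → M) : M :=
  shiftSum m₁ d₁ fun x x' => shiftSum m₂ d₂ fun y y' => G x y x' y'

theorem ZMod.sum_val_eq_sum_range {L : ℕ} [NeZero L] (g : ℕ → M) :
    ∑ u : ZMod L, g u.val = ∑ x ∈ range L, g x := by
  obtain ⟨k, rfl⟩ : ∃ k, L = k + 1 := Nat.exists_eq_succ_of_ne_zero (NeZero.ne L)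
  exact Fin.sum_univ_eq_sum_range g (k + 1)

theorem sum_range_eq_shiftSum {m d N : ℕ} (F : ℕ → ℕ → M) (hF : ∀ x x', m < x' → F x x' = 0)
    (hN : m + 1 - d ≤ N) : ∑ x ∈ range N, F x (x + d) = shiftSum m d F := by
  have hvanish : ∀ x ≥ m + 1 - d, F x (x + d) = 0 := fun x hx => hF _ _ (by omega)
  rw [shiftSum, eventually_constant_sum hvanish hN,
    eventually_constant_sum hvanish (n := m - d + 1) (by omega)]

theorem ZMod.sum_val_add_val {L m : ℕ} [NeZero L] (hm : m < L) (F : ℕ → ℕ → M)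
    (hF : ∀ x x', m < x ∨ m < x' → F x x' = 0) (a : ZMod L) :
    ∑ u : ZMod L, F u.val (u + a).val = shiftSum m a.val F + shiftSum m (L - a.val) (flip F) := by
  set A := a.val
  obtain ⟨D, hD⟩ : ∃ D, L = D + A := ⟨L - A, by have := ZMod.val_lt a; omega⟩
  calc ∑ u : ZMod L, F u.val (u + a).val
      = ∑ x ∈ range L, F x ((x + A) % L) := by
        simp_rw [ZMod.val_add]
        exact ZMod.sum_val_eq_sum_range fun x => F x ((x + A) % L)
    _ = ∑ x ∈ range D, F x (x + A) + ∑ x ∈ range A, flip F x (x + D) := by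
        rw [hD, sum_range_add]
        congr 1
        · refine sum_congr rfl fun x hx => ?_
          rw [Nat.mod_eq_of_lt (by rw [mem_range] at hx; omega)]
        · refine sum_congr rfl fun x hx => ?_
          rw [flip, show D + x + A = x + (D + A) by omega, Nat.add_mod_right,
            Nat.mod_eq_of_lt (by rw [mem_range] at hx; omega), add_comm]
    _ = shiftSum m A F + shiftSum m (L - A) (flip F) := by
        rw [sum_range_eq_shiftSum F (fun x x' h => hF x x' (.inr h)) (by omega),
          show L - A = D by omega,
          sum_range_eq_shiftSum (flip F) (fun x x' h => hF x' x (.inl h)) (by omega)]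

theorem ZMod.sum_prod_val_add_val {L₁ L₂ m₁ m₂ : ℕ} [NeZero L₁] [NeZero L₂] (hm₁ : m₁ < L₁)
    (hm₂ : m₂ < L₂) (G : ℕ → ℕ → ℕ → ℕ → M)
    (hG : ∀ x y x' y', m₁ < x ∨ m₂ < y ∨ m₁ < x' ∨ m₂ < y' → G x y x' y' = 0)
    (a : ZMod L₁ × ZMod L₂) :
    ∑ u : ZMod L₁ × ZMod L₂, G u.1.val u.2.val (u + a).1.val (u + a).2.val =
      shiftSum₂ m₁ m₂ a.1.val a.2.val G +
      shiftSum₂ m₁ m₂ a.1.val (L₂ - a.2.val) (fun x y x' y' => G x y' x' y) +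
      shiftSum₂ m₁ m₂ (L₁ - a.1.val) a.2.val (fun x y x' y' => G x' y x y') +
      shiftSum₂ m₁ m₂ (L₁ - a.1.val) (L₂ - a.2.val) (fun x y x' y' => G x' y' x y) := by
  rw [Fintype.sum_prod_type]
  simp only [Prod.fst_add, Prod.snd_add]
  rw [sum_congr rfl fun x _ => ZMod.sum_val_add_val hm₂ (fun y y' => G x.val y (x + a.1).val y')
      (fun y y' h => hG _ y _ y' (by omega)) a.2, sum_add_distrib,
    ZMod.sum_val_add_val hm₁ (fun x x' => shiftSum m₂ a.2.val fun y y' => G x y x' y')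
      (fun x x' h => sum_eq_zero fun y _ => hG x _ x' _ (by omega)) a.1,
    ZMod.sum_val_add_val hm₁ (fun x x' => shiftSum m₂ (L₂ - a.2.val) (flip fun y y' => G x y x' y'))
      (fun x x' h => sum_eq_zero fun y _ => hG x _ x' _ (by omega)) a.1,
    add_add_add_comm, ← add_assoc]
  rfl

theorem shiftSum₂_congr {m₁ m₂ d₁ d₂ : ℕ} {G G' : ℕ → ℕ → ℕ → ℕ → M}
    (h : ∀ x y x' y', x ≤ m₁ → y ≤ m₂ → x' ≤ m₁ → y' ≤ m₂ → G x y x' y' = G' x y x' y')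
    (hd₁ : d₁ ≤ m₁) (hd₂ : d₂ ≤ m₂) :
    shiftSum₂ m₁ m₂ d₁ d₂ G = shiftSum₂ m₁ m₂ d₁ d₂ G' := by
  unfold shiftSum₂ shiftSum
  refine sum_congr rfl fun x hx => sum_congr rfl fun y hy => ?_
  simp only [mem_range] at hx hy
  exact h _ _ _ _ (by omega) (by omega) (by omega) (by omega)

theorem shiftSum₂_eq_zero_of_forall_le {m₁ m₂ : ℕ} {G : ℕ → ℕ → ℕ → ℕ → M}
    (hG : ∀ x y x' y', m₁ < x' ∨ m₂ < y' → G x y x' y' = 0)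
    (h : ∀ d₁ ≤ m₁, ∀ d₂ ≤ m₂, shiftSum₂ m₁ m₂ d₁ d₂ G = 0) (d₁ d₂ : ℕ) :
    shiftSum₂ m₁ m₂ d₁ d₂ G = 0 := by
  by_cases hd : d₁ ≤ m₁ ∧ d₂ ≤ m₂
  · exact h d₁ hd.1 d₂ hd.2
  · unfold shiftSum₂ shiftSum
    refine sum_eq_zero fun x hx => sum_eq_zero fun y hy => hG _ _ _ _ ?_
    simp only [mem_range] at hx hy
    omega

end ShiftSum

section Symplectic

variable {r₁ r₂ n : ℕ}

theorem sympMat_transpose (P : Matrix (Fin r₁) (Fin n) (ZMod 2 × ZMod 2))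
    (Q : Matrix (Fin r₂) (Fin n) (ZMod 2 × ZMod 2)) : (sympMat P Q)ᵀ = sympMat Q P := by
  ext i j
  simp only [transpose_apply, sympMat]
  exact sum_congr rfl fun k _ => by ring

@[simp]
theorem sympMat_zero_left (Q : Matrix (Fin r₂) (Fin n) (ZMod 2 × ZMod 2)) :
    sympMat (0 : Matrix (Fin r₁) (Fin n) (ZMod 2 × ZMod 2)) Q = 0 := by
  ext i j
  simp [sympMat]

@[simp]
theorem sympMat_zero_right (P : Matrix (Fin r₁) (Fin n) (ZMod 2 × ZMod 2)) :
    sympMat P (0 : Matrix (Fin r₂) (Fin n) (ZMod 2 × ZMod 2)) = 0 := by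
  ext i j
  simp [sympMat]

theorem sum_sympMat_val_add_val_eq_zero {L₁ L₂ m₁ m₂ : ℕ} [NeZero L₁] [NeZero L₂]
    (hm₁ : m₁ < L₁) (hm₂ : m₂ < L₂) (B : ℕ → ℕ → Matrix (Fin r₁) (Fin n) (ZMod 2 × ZMod 2))
    (hB : ∀ i j, m₁ < i ∨ m₂ < j → B i j = 0)
    (h₁ : ∀ d₁ ≤ m₁, ∀ d₂ ≤ m₂,
      shiftSum₂ m₁ m₂ d₁ d₂ (fun i j i' j' => sympMat (B i j) (B i' j')) = 0)
    (h₂ : ∀ d₁ ≤ m₁, ∀ d₂ ≤ m₂,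
      shiftSum₂ m₁ m₂ d₁ d₂ (fun i j i' j' => sympMat (B i' j) (B i j')) = 0)
    (a : ZMod L₁ × ZMod L₂) :
    ∑ u : ZMod L₁ × ZMod L₂, sympMat (B u.1.val u.2.val) (B (u + a).1.val (u + a).2.val) = 0 := by
  have hG : ∀ x y x' y', m₁ < x ∨ m₂ < y ∨ m₁ < x' ∨ m₂ < y' →
      sympMat (B x y) (B x' y') = 0 := by
    intro x y x' y' h
    by_cases hxy : m₁ < x ∨ m₂ < y
    · simp [hB x y hxy]
    · simp [hB x' y' (by omega)]
  have h₁_all := shiftSum₂_eq_zero_of_forall_le (fun x y x' y' h => hG x y x' y' (by omega)) h₁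
  have h₂_all := shiftSum₂_eq_zero_of_forall_le (fun x y x' y' h => hG x' y x y' (by omega)) h₂
  have h₁_swap : ∀ d₁ d₂,
      shiftSum₂ m₁ m₂ d₁ d₂ (fun i j i' j' => sympMat (B i' j') (B i j)) = 0 := fun d₁ d₂ => by
    simpa only [shiftSum₂, shiftSum, transpose_sum, sympMat_transpose, transpose_zero]
      using congrArg transpose (h₁_all d₁ d₂)
  have h₂_swap : ∀ d₁ d₂,
      shiftSum₂ m₁ m₂ d₁ d₂ (fun i j i' j' => sympMat (B i j') (B i' j)) = 0 := fun d₁ d₂ => by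
    simpa only [shiftSum₂, shiftSum, transpose_sum, sympMat_transpose, transpose_zero]
      using congrArg transpose (h₂_all d₁ d₂)
  rw [ZMod.sum_prod_val_add_val hm₁ hm₂ _ hG, h₁_all, h₂_swap, h₂_all, h₁_swap,
    add_zero, add_zero, add_zero]

end Symplectic

section Restrict

variable {α M : Type*} [Zero α] [AddCommMonoid M] {m₁ m₂ : ℕ} {H : ℕ → ℕ → α} {i j : ℕ}

def restrictBox (m₁ m₂ : ℕ) (H : ℕ → ℕ → α) (i j : ℕ) : α :=
  if i ≤ m₁ ∧ j ≤ m₂ then H i j else 0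

theorem restrictBox_of_le (hi : i ≤ m₁) (hj : j ≤ m₂) : restrictBox m₁ m₂ H i j = H i j :=
  if_pos ⟨hi, hj⟩

theorem restrictBox_of_lt (h : m₁ < i ∨ m₂ < j) : restrictBox m₁ m₂ H i j = 0 :=
  if_neg (by omega)

theorem shiftSum₂_restrictBox {d₁ d₂ : ℕ} (Φ : α → α → α → α → M) (hd₁ : d₁ ≤ m₁) (hd₂ : d₂ ≤ m₂) :
    shiftSum₂ m₁ m₂ d₁ d₂ (fun x y x' y' => Φ (restrictBox m₁ m₂ H x y) (restrictBox m₁ m₂ H x y')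
        (restrictBox m₁ m₂ H x' y) (restrictBox m₁ m₂ H x' y')) =
      shiftSum₂ m₁ m₂ d₁ d₂ (fun x y x' y' => Φ (H x y) (H x y') (H x' y) (H x' y')) :=
  shiftSum₂_congr (fun x y x' y' hx hy hx' hy' => by
    rw [restrictBox_of_le hx hy, restrictBox_of_le hx hy', restrictBox_of_le hx' hy,
      restrictBox_of_le hx' hy']) hd₁ hd₂

end Restrict

theorem ZMod.eq_add_natCast_iff {L : ℕ} [NeZero L] {u v : ZMod L} {i : ℕ} (hi : i < L) :
    u = v + i ↔ i = (u - v).val := by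
  rw [← sub_eq_iff_eq_add']
  constructor
  · rintro h
    rw [h, ZMod.val_natCast_of_lt hi]
  · rintro rfl
    exact (ZMod.natCast_zmod_val _).symm

theorem Hfull_eq_restrictBox {m₁ m₂ r n L₁ L₂ : ℕ} [NeZero L₁] [NeZero L₂] (hL₁ : m₁ < L₁)
    (hL₂ : m₂ < L₂) (H : ℕ → ℕ → Matrix (Fin r) (Fin n) (ZMod 2 × ZMod 2))
    (t s : ZMod L₁ × ZMod L₂) :
    Hfull m₁ m₂ L₁ L₂ H t s = restrictBox m₁ m₂ H (t - s).1.val (t - s).2.val := by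
  have hcond : ∀ i ∈ range (m₁ + 1), ∀ j ∈ range (m₂ + 1),
      (t.1 = s.1 + i ∧ t.2 = s.2 + j) ↔ (i = (t - s).1.val ∧ j = (t - s).2.val) := by
    intro i hi j hj
    simp only [mem_range] at hi hj
    rw [ZMod.eq_add_natCast_iff (by omega), ZMod.eq_add_natCast_iff (by omega)]
    rfl
  rw [Hfull, sum_congr rfl fun i hi => sum_congr rfl fun j hj => if_congr (hcond i hi j hj) rfl rfl]
  simp [restrictBox, ite_and, sum_ite_eq']

theorem twoDSC_stabilizer_general (m₁ m₂ r n L₁ L₂ : ℕ) [NeZero L₁] [NeZero L₂]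
    (hL₁ : m₁ < L₁) (hL₂ : m₂ < L₂)
    (H : ℕ → ℕ → Matrix (Fin r) (Fin n) (ZMod 2 × ZMod 2))
    (h1 : ∀ d₁ ≤ m₁, ∀ d₂ ≤ m₂,
      ∑ i ∈ Finset.range (m₁ - d₁ + 1), ∑ j ∈ Finset.range (m₂ - d₂ + 1),
        sympMat (H i j) (H (i + d₁) (j + d₂)) = 0)
    (h2 : ∀ d₁ ≤ m₁, ∀ d₂ ≤ m₂,
      ∑ i ∈ Finset.range (m₁ - d₁ + 1), ∑ j ∈ Finset.range (m₂ - d₂ + 1),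
        sympMat (H (i + d₁) j) (H i (j + d₂)) = 0) :
    ∀ (t t' : ZMod L₁ × ZMod L₂) (ρ ρ' : Fin r),
      ∑ s : ZMod L₁ × ZMod L₂, ∑ c : Fin n,
        ((Hfull m₁ m₂ L₁ L₂ H t s ρ c).1 * (Hfull m₁ m₂ L₁ L₂ H t' s ρ' c).2 +
         (Hfull m₁ m₂ L₁ L₂ H t s ρ c).2 * (Hfull m₁ m₂ L₁ L₂ H t' s ρ' c).1) = 0 := by
  intro t t' ρ ρ'
  have hrows : ∑ s, sympMat (Hfull m₁ m₂ L₁ L₂ H t s) (Hfull m₁ m₂ L₁ L₂ H t' s) = 0 := by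
    simp_rw [Hfull_eq_restrictBox hL₁ hL₂]
    rw [← (Equiv.subLeft t).sum_comp]
    simp_rw [Equiv.subLeft_apply, sub_sub_cancel,
      show ∀ u, t' - (t - u) = u + (t' - t) from fun u => by abel]
    refine sum_sympMat_val_add_val_eq_zero hL₁ hL₂ _ (fun i j => restrictBox_of_lt)
      (fun d₁ hd₁ d₂ hd₂ => ?_) (fun d₁ hd₁ d₂ hd₂ => ?_) (t' - t)
    · exact (shiftSum₂_restrictBox (fun P _ _ Q => sympMat P Q) hd₁ hd₂).trans (h1 d₁ hd₁ d₂ hd₂)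
    · exact (shiftSum₂_restrictBox (fun _ Q P _ => sympMat P Q) hd₁ hd₂).trans (h2 d₁ hd₁ d₂ hd₂)
  simpa [Matrix.sum_apply, sympMat] using congrFun (congrFun hrows ρ) ρ'

/-- Theorem 1: if the component matrices of a 2D-SC code satisfy the two families of
symplectic conditions, then all rows of the tail-biting 2D-SC parity check matrix have
pairwise vanishing symplectic inner products, i.e. all stabilizer generators commute. -/
theorem twoDSC_stabilizer (m₁ m₂ r n L₁ L₂ : ℕ) [NeZero L₁] [NeZero L₂]
    (hL₁ : m₁ < L₁) (hL₂ : m₂ < L₂)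
    (H : ℕ → ℕ → Matrix (Fin r) (Fin n) (ZMod 2 × ZMod 2))
    (hsupp : ∀ i j, (m₁ < i ∨ m₂ < j) → H i j = 0)
    (h1 : ∀ d₁ ≤ m₁, ∀ d₂ ≤ m₂,
      ∑ i ∈ Finset.range (m₁ - d₁ + 1), ∑ j ∈ Finset.range (m₂ - d₂ + 1),
        sympMat (H i j) (H (i + d₁) (j + d₂)) = 0)
    (h2 : ∀ d₁ ≤ m₁, ∀ d₂ ≤ m₂,
      ∑ i ∈ Finset.range (m₁ - d₁ + 1), ∑ j ∈ Finset.range (m₂ - d₂ + 1),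
        sympMat (H (i + d₁) j) (H i (j + d₂)) = 0) :
    ∀ (t t' : ZMod L₁ × ZMod L₂) (ρ ρ' : Fin r),
      ∑ s : ZMod L₁ × ZMod L₂, ∑ c : Fin n,
        ((Hfull m₁ m₂ L₁ L₂ H t s ρ c).1 * (Hfull m₁ m₂ L₁ L₂ H t' s ρ' c).2 +
         (Hfull m₁ m₂ L₁ L₂ H t s ρ c).2 * (Hfull m₁ m₂ L₁ L₂ H t' s ρ' c).1) = 0 :=
  twoDSC_stabilizer_general m₁ m₂ r n L₁ L₂ hL₁ hL₂ H h1 h2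
end

section
/- (2D-SC hypergraph product codes are stabilizer codes.) Let A(U,V) and B(U,V) be polynomial matrices in two indeterminates with F₂-coefficients of sizes r₁×n₁ and r₂×n₂, with maximal degrees m₁ in U and m₂ in V, and let Ā(U,V) = U^{m₁}V^{m₂}A(U⁻¹,V⁻¹), B̄(U,V) = U^{m₁}V^{m₂}B(U⁻¹,V⁻¹). Define the block matrix F(U,V) = [[X·(I_{n₂} ⊗ A(U,V)), X·(B̄(U,V)ᵀ ⊗ I_{r₁})], [Z·(B(U,V) ⊗ I_{n₁}), Z·(I_{r₂} ⊗ Ā(U,V)ᵀ)]], where multiplication by the symbol X (resp. Z) means each F₂ polynomial coefficient 1 is replaced by X (resp. Z). Then ⟨F(U,V), F(U⁻¹,V⁻¹)⟩_s = 0 as an (r₁n₂+r₂n₁)×(r₁n₂+r₂n₁) F₂-matrix polynomial. -/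
/-! An X-row and an X-row, or a Z-row and a Z-row, never anticommute. For an X-row and a Z-row
the coefficient at `U^{d₁}V^{d₂}` has the form `∑ₓ ψ(x, x + d) + ψ(m - (x + d), m - x)` with
`ψ(a, b) = A_a B_b` supported on the box `[0, m₁] × [0, m₂]` and `m = (m₁, m₂)`. Shifting the first
sum by `d` (harmless since `ψ` vanishes off the box) and reflecting the second one through
`x ↦ m - x` turns both into `∑ₓ ψ(x - d, x)`, so the coefficient is even, hence zero over `F₂`. -/

open Matrix Finset

abbrev Pauli := ZMod 2 × ZMod 2

/-- Symplectic inner product of two Pauli rows indexed by a finite type. -/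
def sympRow {α : Type*} [Fintype α] (p q : α → Pauli) : ZMod 2 :=
  ∑ k, ((p k).1 * (q k).2 + (p k).2 * (q k).1)

/-- The coefficient at `U^kV^l` of the characteristic function of the 2D-SC hypergraph
product code built from `F₂`-polynomial matrices `A` and `B`:
`F(U,V) = [[X(I_{n₂}⊗A), X(B̄ᵀ⊗I_{r₁})], [Z(B⊗I_{n₁}), Z(I_{r₂}⊗Āᵀ)]]`,
with `Ā k l = A (m₁-k) (m₂-l)` and `B̄ k l = B (m₁-k) (m₂-l)`.
X-type entries sit in the first `F₂` component, Z-type in the second. -/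
def Fhgp (m₁ m₂ : ℕ) {r₁ n₁ r₂ n₂ : ℕ}
    (A : ℤ → ℤ → Matrix (Fin r₁) (Fin n₁) (ZMod 2))
    (B : ℤ → ℤ → Matrix (Fin r₂) (Fin n₂) (ZMod 2)) (k l : ℤ)
    (ρ : (Fin n₂ × Fin r₁) ⊕ (Fin r₂ × Fin n₁))
    (q : (Fin n₂ × Fin n₁) ⊕ (Fin r₂ × Fin r₁)) : Pauli :=
  match ρ, q with
  | Sum.inl (c, i), Sum.inl (c', j) => if c = c' then (A k l i j, 0) else 0
  | Sum.inl (c, i), Sum.inr (t, i') => if i = i' then (B ((m₁ : ℤ) - k) ((m₂ : ℤ) - l) t c, 0) else 0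
  | Sum.inr (t, j), Sum.inl (c, j') => if j = j' then (0, B k l t c) else 0
  | Sum.inr (t, j), Sum.inr (t', i) =>
      if t = t' then (0, A ((m₁ : ℤ) - k) ((m₂ : ℤ) - l) i j) else 0

section Correlation

variable {G M : Type*} [AddCommGroup G] [AddCommMonoid M]

theorem sum_apply_add_eq_sum_apply_sub (s : Finset G) (φ : G → G → M)
    (hφ : ∀ a b, a ∉ s ∨ b ∉ s → φ a b = 0) (d : G) :
    ∑ x ∈ s, φ x (x + d) = ∑ x ∈ s, φ (x - d) x := by
  have hl : ∑ᶠ x, φ x (x + d) = ∑ x ∈ s, φ x (x + d) :=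
    finsum_eq_sum_of_support_subset _ fun x hx => by_contra fun h => hx (hφ _ _ (.inl h))
  have hr : ∑ᶠ x, φ (x - d) x = ∑ x ∈ s, φ (x - d) x :=
    finsum_eq_sum_of_support_subset _ fun x hx => by_contra fun h => hx (hφ _ _ (.inr h))
  rw [← hl, ← hr, ← finsum_comp_equiv (Equiv.subRight d)]
  simp

theorem sum_apply_const_sub (s : Finset G) (c : G) (hs : ∀ x ∈ s, c - x ∈ s) (f : G → M) :
    ∑ x ∈ s, f (c - x) = ∑ x ∈ s, f x :=
  sum_nbij' (c - ·) (c - ·) hs hs (by simp) (by simp) (fun _ _ => rfl)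

theorem sum_shift_add_reflect_eq_two_nsmul (s : Finset G) (c : G) (hs : ∀ x ∈ s, c - x ∈ s)
    (φ : G → G → M) (hφ : ∀ a b, a ∉ s ∨ b ∉ s → φ a b = 0) (d : G) :
    ∑ x ∈ s, (φ x (x + d) + φ (c - (x + d)) (c - x)) = 2 • ∑ x ∈ s, φ (x - d) x := by
  have hreflect : ∑ x ∈ s, φ (c - (x + d)) (c - x) = ∑ x ∈ s, φ (x - d) x := by
    simpa only [sub_sub] using sum_apply_const_sub s c hs fun x => φ (x - d) x
  rw [sum_add_distrib, sum_apply_add_eq_sum_apply_sub s φ hφ, hreflect, two_nsmul]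

end Correlation

section Symplectic

variable {α : Type*} [Fintype α]

theorem sympRow_comm (p q : α → Pauli) : sympRow p q = sympRow q p := by
  simp only [sympRow, mul_comm, add_comm]

theorem sympRow_eq_zero_of_snd_eq_zero {p q : α → Pauli} (hp : ∀ k, (p k).2 = 0)
    (hq : ∀ k, (q k).2 = 0) : sympRow p q = 0 := by
  simp [sympRow, hp, hq]

theorem sympRow_eq_zero_of_fst_eq_zero {p q : α → Pauli} (hp : ∀ k, (p k).1 = 0)
    (hq : ∀ k, (q k).1 = 0) : sympRow p q = 0 := by
  simp [sympRow, hp, hq]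

end Symplectic

section Fhgp

variable {m₁ m₂ r₁ n₁ r₂ n₂ : ℕ} (A : ℤ → ℤ → Matrix (Fin r₁) (Fin n₁) (ZMod 2))
  (B : ℤ → ℤ → Matrix (Fin r₂) (Fin n₂) (ZMod 2))

theorem Fhgp_inl_snd (k l : ℤ) (x : Fin n₂ × Fin r₁)
    (q : (Fin n₂ × Fin n₁) ⊕ (Fin r₂ × Fin r₁)) : (Fhgp m₁ m₂ A B k l (.inl x) q).2 = 0 := by
  obtain ⟨c, i⟩ := x
  rcases q with ⟨c', j⟩ | ⟨t, i'⟩ <;> simp [Fhgp, apply_ite Prod.snd]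

theorem Fhgp_inr_fst (k l : ℤ) (x : Fin r₂ × Fin n₁)
    (q : (Fin n₂ × Fin n₁) ⊕ (Fin r₂ × Fin r₁)) : (Fhgp m₁ m₂ A B k l (.inr x) q).1 = 0 := by
  obtain ⟨t, j⟩ := x
  rcases q with ⟨c, j'⟩ | ⟨t', i⟩ <;> simp [Fhgp, apply_ite Prod.fst]

theorem sympRow_Fhgp_inl_inr (k l k' l' : ℤ) (c : Fin n₂) (i : Fin r₁) (t : Fin r₂) (j : Fin n₁) :
    sympRow (Fhgp m₁ m₂ A B k l (.inl (c, i))) (Fhgp m₁ m₂ A B k' l' (.inr (t, j))) =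
      A k l i j * B k' l' t c + A (m₁ - k') (m₂ - l') i j * B (m₁ - k) (m₂ - l) t c := by
  simp [sympRow, Fhgp, Fintype.sum_sum_type, Fintype.sum_prod_type, apply_ite Prod.fst,
    apply_ite Prod.snd, mul_ite, mul_comm]

end Fhgp

theorem eq_zero_of_notMem_box {M : Type*} [Zero M] {m₁ m₂ : ℕ} {f : ℤ → ℤ → M}
    (hf : ∀ i j : ℤ, (i < 0 ∨ (m₁ : ℤ) < i ∨ j < 0 ∨ (m₂ : ℤ) < j) → f i j = 0) {a : ℤ × ℤ}
    (ha : a ∉ Icc (0 : ℤ) m₁ ×ˢ Icc (0 : ℤ) m₂) : f a.1 a.2 = 0 :=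
  hf _ _ (by simp only [mem_product, mem_Icc] at ha; omega)

/-- 2D-SC hypergraph product codes are stabilizer codes:
every coefficient of `⟨F(U,V), F(U⁻¹,V⁻¹)⟩_s` is the zero matrix. -/
theorem scHGP_stabilizer (m₁ m₂ r₁ n₁ r₂ n₂ : ℕ)
    (A : ℤ → ℤ → Matrix (Fin r₁) (Fin n₁) (ZMod 2))
    (B : ℤ → ℤ → Matrix (Fin r₂) (Fin n₂) (ZMod 2))
    (hA : ∀ i j : ℤ, (i < 0 ∨ (m₁ : ℤ) < i ∨ j < 0 ∨ (m₂ : ℤ) < j) → A i j = 0)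
    (hB : ∀ i j : ℤ, (i < 0 ∨ (m₁ : ℤ) < i ∨ j < 0 ∨ (m₂ : ℤ) < j) → B i j = 0) :
    ∀ (d₁ d₂ : ℤ) (ρ ρ' : (Fin n₂ × Fin r₁) ⊕ (Fin r₂ × Fin n₁)),
      ∑ k ∈ Finset.Icc (0 : ℤ) (m₁ : ℤ), ∑ l ∈ Finset.Icc (0 : ℤ) (m₂ : ℤ),
        sympRow (Fhgp m₁ m₂ A B k l ρ) (Fhgp m₁ m₂ A B (k + d₁) (l + d₂) ρ') = 0 := by
  intro d₁ d₂ ρ ρ'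
  set box := Icc (0 : ℤ) m₁ ×ˢ Icc (0 : ℤ) m₂
  have hbox : ∀ x ∈ box, ((m₁ : ℤ), (m₂ : ℤ)) - x ∈ box := by
    simp only [box, mem_product, mem_Icc, Prod.fst_sub, Prod.snd_sub]
    omega
  have hAB : ∀ i j t c (a b : ℤ × ℤ), a ∉ box ∨ b ∉ box → A a.1 a.2 i j * B b.1 b.2 t c = 0 := by
    rintro i j t c a b (ha | hb)
    · simp [eq_zero_of_notMem_box hA ha]
    · simp [eq_zero_of_notMem_box hB hb]
  rw [← sum_product']
  rcases ρ with ⟨c, i⟩ | ⟨t, j⟩ <;> rcases ρ' with ⟨c', i'⟩ | ⟨t', j'⟩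
  · exact sum_eq_zero fun x _ =>
      sympRow_eq_zero_of_snd_eq_zero (Fhgp_inl_snd A B _ _ _) (Fhgp_inl_snd A B _ _ _)
  · refine (sum_congr rfl fun x _ => sympRow_Fhgp_inl_inr A B ..).trans ?_
    exact (sum_shift_add_reflect_eq_two_nsmul box _ hbox _ (hAB i j' t' c) (d₁, d₂)).trans
      (CharTwo.two_nsmul _)
  · refine (sum_congr rfl fun x _ => (sympRow_comm ..).trans (sympRow_Fhgp_inl_inr A B ..)).trans ?_
    exact (sum_shift_add_reflect_eq_two_nsmul box _ hbox
      (fun a b => A b.1 b.2 i' j * B a.1 a.2 t c')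
      (fun a b h => hAB i' j t c' b a h.symm) (d₁, d₂)).trans (CharTwo.two_nsmul _)
  · exact sum_eq_zero fun x _ =>
      sympRow_eq_zero_of_fst_eq_zero (Fhgp_inr_fst A B _ _ _) (Fhgp_inr_fst A B _ _ _)
end

section
/- (Alternating sum cycle condition.) Let P be a γ×κ integer partitioning matrix for a tail-biting spatially-coupled code with coupling length L. A closed path (j₁,i₁,j₂,i₂,…,j_g,i_g) in the base matrix (with j_{g+1} = j₁), visiting entries (i_k, j_k) and (i_k, j_{k+1}) of P, gives rise to a cycle of length 2g in the protograph if and only if Σ_{k=1}^{g} (P_{i_k,j_k} − P_{i_k,j_{k+1}}) ≡ 0 (mod L). -/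
open Finset

theorem sub_eq_sum_range_of_succ_eq_add {G : Type*} [AddCommGroup G] (T d : ℕ → G)
    (hT : ∀ k, T (k + 1) = T k + d k) (n : ℕ) :
    T n - T 0 = ∑ k ∈ range n, d k := by
  rw [← Finset.sum_range_sub]
  simp only [hT, add_sub_cancel_left]

theorem alternating_sum_cycle_condition_general (γ κ L g : ℕ)
    (P : Fin γ → Fin κ → ℤ)
    (i : ℕ → Fin γ) (j : ℕ → Fin κ)
    (T : ℕ → ZMod L)
    (hT : ∀ k, T (k + 1) = T k + ((P (i k) (j k) - P (i k) (j (k + 1)) : ℤ) : ZMod L)) :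
    T g = T 0 ↔
      (∑ k ∈ Finset.range g, (P (i k) (j k) - P (i k) (j (k + 1)))) ≡ 0 [ZMOD (L : ℤ)] := by
  rw [← sub_eq_zero, sub_eq_sum_range_of_succ_eq_add T _ hT, ← Int.cast_sum, ← Int.cast_zero,
    ZMod.intCast_eq_intCast_iff]

/-- The alternating sum cycle condition for tail-biting SC codes: the lifted walk of a
closed path `(j₁,i₁,…,j_g,i_g)` in the base matrix, whose column-replica trajectory `T`
satisfies `T_{k+1} = T_k + P_{i_k,j_k} − P_{i_k,j_{k+1}} (mod L)`, closes up (giving a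
cycle of length `2g` in the protograph) iff the alternating sum of partitioning values
vanishes modulo `L`. -/
theorem alternating_sum_cycle_condition (γ κ L g : ℕ) [NeZero L] (hg : 2 ≤ g)
    (P : Fin γ → Fin κ → ℤ)
    (i : ℕ → Fin γ) (j : ℕ → Fin κ) (hclose : j g = j 0)
    (T : ℕ → ZMod L)
    (hT : ∀ k, T (k + 1) = T k + ((P (i k) (j k) - P (i k) (j (k + 1)) : ℤ) : ZMod L)) :
    T g = T 0 ↔
      (∑ k ∈ Finset.range g, (P (i k) (j k) - P (i k) (j (k + 1)))) ≡ 0 [ZMOD (L : ℤ)] :=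
  alternating_sum_cycle_condition_general γ κ L g P i j T hT
end

section
/- In a tail-biting SC code with coupling length L, every cycle candidate in the base matrix whose alternating partitioning sum is zero gives rise to exactly L distinct cycles in the protograph (one per replica offset). -/
open Finset

/-- The lifted column-replica trajectory of a closed path with per-step displacements `δ`,
started at replica offset `t₀`. -/
def traj (L : ℕ) (δ : ℕ → ℤ) (t₀ : ZMod L) (k : ℕ) : ZMod L :=
  t₀ + ∑ l ∈ Finset.range k, ((δ l : ℤ) : ZMod L)

/-! Shifting the starting replica translates the whole lifted walk, so it closes up for one
offset iff for all, namely iff the alternating sum vanishes mod `L`; and walks with different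
starting replicas already differ at step `0`. -/

section Traj

variable {L : ℕ} (δ : ℕ → ℤ)

theorem traj_eq_add_sum (t₀ : ZMod L) (k : ℕ) :
    traj L δ t₀ k = t₀ + ((∑ l ∈ range k, δ l : ℤ) : ZMod L) := by
  rw [traj, Int.cast_sum]

@[simp]
theorem traj_zero (t₀ : ZMod L) : traj L δ t₀ 0 = t₀ := by
  simp [traj]

theorem traj_eq_traj_zero_of_sum_modEq_zero {g : ℕ}
    (hsum : (∑ k ∈ range g, δ k) ≡ 0 [ZMOD (L : ℤ)]) (t₀ : ZMod L) :
    traj L δ t₀ g = traj L δ t₀ 0 := by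
  have hcast : ((∑ k ∈ range g, δ k : ℤ) : ZMod L) = 0 :=
    (ZMod.intCast_zmod_eq_zero_iff_dvd _ L).2 (Int.modEq_zero_iff_dvd.1 hsum)
  rw [traj_eq_add_sum, hcast, add_zero, traj_zero]

theorem traj_injective : Function.Injective (traj L δ) := fun a b hab => by
  simpa using congrFun hab 0

theorem ncard_range_traj : (Set.range (traj L δ)).ncard = L := by
  rw [← Set.image_univ, Set.ncard_image_of_injective _ (traj_injective δ), Set.ncard_univ,
    Nat.card_zmod]

end Traj

theorem zero_alternating_sum_gives_L_cycles_general (L g : ℕ) (δ : ℕ → ℤ)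
    (hsum : (∑ k ∈ Finset.range g, δ k) ≡ 0 [ZMOD (L : ℤ)]) :
    (∀ t₀ : ZMod L, traj L δ t₀ g = traj L δ t₀ 0) ∧
    Set.ncard (Set.range (traj L δ)) = L :=
  ⟨traj_eq_traj_zero_of_sum_modEq_zero δ hsum, ncard_range_traj δ⟩

/-- In a tail-biting SC code with coupling length `L`, a cycle candidate whose alternating
partitioning sum vanishes mod `L` gives rise to exactly `L` distinct cycles in the
protograph: each of the `L` replica offsets yields a closed lifted walk, and these `L`
walks are pairwise distinct. -/
theorem zero_alternating_sum_gives_L_cycles (γ κ L g : ℕ) [NeZero L] (hg : 2 ≤ g)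
    (P : Fin γ → Fin κ → ℤ)
    (i : ℕ → Fin γ) (j : ℕ → Fin κ) (hclose : j g = j 0)
    (δ : ℕ → ℤ) (hδ : ∀ k, δ k = P (i k) (j k) - P (i k) (j (k + 1)))
    (hsum : (∑ k ∈ Finset.range g, δ k) ≡ 0 [ZMOD (L : ℤ)]) :
    (∀ t₀ : ZMod L, traj L δ t₀ g = traj L δ t₀ 0) ∧
    Set.ncard (Set.range (traj L δ)) = L :=
  zero_alternating_sum_gives_L_cycles_general L g δ hsum
end

section
/- (Rigid cycle lower bound.) Let H be the parity check matrix of an N-qubit stabilizer code in which all generators pairwise commute, and suppose variable node i is connected to d_i^X checks via X, d_i^Y via Y, and d_i^Z via Z. Then for each qubit i, any two connections of distinct Pauli types (X/Y, Y/Z, or Z/X) at that qubit must anti-commute locally, so the two corresponding checks must share at least one other qubit; consequently the Tanner graph contains at least (1/2)·Σ_{i=1}^N (d_i^X d_i^Y + d_i^Y d_i^Z + d_i^Z d_i^X) cycles of length 4. In particular, for a CSS code this lower bound equals (1/2)·Σ_{i=1}^N d_i^Z d_i^X. -/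
open Finset

/-- Number of checks acting as Pauli `X` on qubit `q`. -/
def dX {R N : ℕ} (H : Fin R → Fin N → ZMod 2 × ZMod 2) (q : Fin N) : ℕ :=
  (Finset.univ.filter (fun c => H c q = ((1 : ZMod 2), (0 : ZMod 2)))).card

/-- Number of checks acting as Pauli `Y` on qubit `q`. -/
def dY {R N : ℕ} (H : Fin R → Fin N → ZMod 2 × ZMod 2) (q : Fin N) : ℕ :=
  (Finset.univ.filter (fun c => H c q = ((1 : ZMod 2), (1 : ZMod 2)))).card

/-- Number of checks acting as Pauli `Z` on qubit `q`. -/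
def dZ {R N : ℕ} (H : Fin R → Fin N → ZMod 2 × ZMod 2) (q : Fin N) : ℕ :=
  (Finset.univ.filter (fun c => H c q = ((0 : ZMod 2), (1 : ZMod 2)))).card

/-- The number of length-4 cycles in the Tanner graph of `H`: pairs of checks together
with pairs of qubits, all four incidences nonzero. -/
noncomputable def numC4 {R N : ℕ} (H : Fin R → Fin N → ZMod 2 × ZMod 2) : ℕ :=
  Fintype.card {x : (Fin R × Fin R) × (Fin N × Fin N) //
    x.1.1 < x.1.2 ∧ x.2.1 < x.2.2 ∧
    H x.1.1 x.2.1 ≠ 0 ∧ H x.1.1 x.2.2 ≠ 0 ∧ H x.1.2 x.2.1 ≠ 0 ∧ H x.1.2 x.2.2 ≠ 0}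

/- ## Auxiliary material -/

/-- `cond3 a b`: the local Paulis `a`, `b` form one of the ordered patterns XY, YZ, ZX. -/
def cond3 (a b : ZMod 2 × ZMod 2) : Prop :=
  (a = ((1 : ZMod 2), (0 : ZMod 2)) ∧ b = ((1 : ZMod 2), (1 : ZMod 2))) ∨
  (a = ((1 : ZMod 2), (1 : ZMod 2)) ∧ b = ((0 : ZMod 2), (1 : ZMod 2))) ∨
  (a = ((0 : ZMod 2), (1 : ZMod 2)) ∧ b = ((1 : ZMod 2), (0 : ZMod 2)))

instance cond3_dec (a b : ZMod 2 × ZMod 2) : Decidable (cond3 a b) := by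
  unfold cond3; infer_instance

lemma cond3_asymm : ∀ a b : ZMod 2 × ZMod 2, cond3 a b → cond3 b a → False := by decide

lemma cond3_sp : ∀ a b : ZMod 2 × ZMod 2, cond3 a b → a.1 * b.2 + a.2 * b.1 = 1 := by decide

lemma cond3_nz : ∀ a b : ZMod 2 × ZMod 2, cond3 a b → a ≠ 0 ∧ b ≠ 0 ∧ a ≠ b := by decide

/-- Set of (ordered pair of checks, qubit) with an anticommuting local overlap pattern. -/
def Tset {R N : ℕ} (H : Fin R → Fin N → ZMod 2 × ZMod 2) :
    Finset ((Fin R × Fin R) × Fin N) :=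
  Finset.univ.filter (fun x => cond3 (H x.1.1 x.2) (H x.1.2 x.2))

/-- Finset version of the 4-cycle count. -/
def Cset {R N : ℕ} (H : Fin R → Fin N → ZMod 2 × ZMod 2) :
    Finset ((Fin R × Fin R) × (Fin N × Fin N)) :=
  Finset.univ.filter (fun x =>
    x.1.1 < x.1.2 ∧ x.2.1 < x.2.2 ∧
    H x.1.1 x.2.1 ≠ 0 ∧ H x.1.1 x.2.2 ≠ 0 ∧ H x.1.2 x.2.1 ≠ 0 ∧ H x.1.2 x.2.2 ≠ 0)

/-- A choice of companion qubit. -/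
noncomputable def gfun {R N : ℕ} (H : Fin R → Fin N → ZMod 2 × ZMod 2)
    (x : (Fin R × Fin R) × Fin N) : Fin N :=
  if h : ∃ q', q' ≠ x.2 ∧ H x.1.1 q' ≠ 0 ∧ H x.1.2 q' ≠ 0 then h.choose else x.2

/-- Map a local anticommuting overlap to a 4-cycle (sorted pairs). -/
noncomputable def ffun {R N : ℕ} (H : Fin R → Fin N → ZMod 2 × ZMod 2)
    (x : (Fin R × Fin R) × Fin N) : (Fin R × Fin R) × (Fin N × Fin N) :=
  ((if x.1.1 < x.1.2 then x.1 else (x.1.2, x.1.1)),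
   (if x.2 < gfun H x then (x.2, gfun H x) else (gfun H x, x.2)))

lemma ffun_fst {R N : ℕ} (H : Fin R → Fin N → ZMod 2 × ZMod 2)
    (a : (Fin R × Fin R) × Fin N) (y : (Fin R × Fin R) × (Fin N × Fin N))
    (h : ffun H a = y) : a.1 = y.1 ∨ a.1 = (y.1.2, y.1.1) := by
  have h1 := congrArg Prod.fst h
  simp only [ffun] at h1
  by_cases hc : a.1.1 < a.1.2
  · left; rwa [if_pos hc] at h1
  · right
    rw [if_neg hc] at h1
    rw [Prod.ext_iff] at h1
    simp only at h1
    rw [Prod.ext_iff]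
    exact ⟨h1.2, h1.1⟩

lemma ffun_snd {R N : ℕ} (H : Fin R → Fin N → ZMod 2 × ZMod 2)
    (a : (Fin R × Fin R) × Fin N) (y : (Fin R × Fin R) × (Fin N × Fin N))
    (h : ffun H a = y) : a.2 = y.2.1 ∨ a.2 = y.2.2 := by
  have h1 := congrArg Prod.snd h
  simp only [ffun] at h1
  by_cases hc : a.2 < gfun H a
  · left; rw [if_pos hc] at h1; exact congrArg Prod.fst h1
  · right; rw [if_neg hc] at h1; exact congrArg Prod.snd h1

/-- Rigid cycle lower bound. -/
theorem rigid_cycle_lower_bound (R N : ℕ)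
    (H : Fin R → Fin N → ZMod 2 × ZMod 2)
    (hcomm : ∀ c c' : Fin R,
      ∑ q, ((H c q).1 * (H c' q).2 + (H c q).2 * (H c' q).1) = 0) :
    (∀ (c c' : Fin R) (q : Fin N),
        (H c q).1 * (H c' q).2 + (H c q).2 * (H c' q).1 = 1 →
        ∃ q', q' ≠ q ∧ H c q' ≠ 0 ∧ H c' q' ≠ 0) ∧
    ((numC4 H : ℚ) ≥
      (1 / 2) * ∑ q : Fin N,
        ((dX H q * dY H q + dY H q * dZ H q + dZ H q * dX H q : ℕ) : ℚ)) ∧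
    ((∀ c : Fin R, (∀ q, (H c q).2 = 0) ∨ (∀ q, (H c q).1 = 0)) →
      (1 / 2) * ∑ q : Fin N,
        ((dX H q * dY H q + dY H q * dZ H q + dZ H q * dX H q : ℕ) : ℚ) =
      (1 / 2) * ∑ q : Fin N, ((dZ H q * dX H q : ℕ) : ℚ)) := by
  classical
  -- Part 1
  have h1 : ∀ (c c' : Fin R) (q : Fin N),
      (H c q).1 * (H c' q).2 + (H c q).2 * (H c' q).1 = 1 →
      ∃ q', q' ≠ q ∧ H c q' ≠ 0 ∧ H c' q' ≠ 0 := by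
    intro c c' q hq
    have hsum := hcomm c c'
    rw [← Finset.add_sum_erase _ _ (Finset.mem_univ q), hq] at hsum
    have hS : ∑ q' ∈ Finset.univ.erase q,
        ((H c q').1 * (H c' q').2 + (H c q').2 * (H c' q').1) ≠ 0 := by
      intro h0
      rw [h0, add_zero] at hsum
      exact one_ne_zero hsum
    obtain ⟨q', hq'mem, hq'⟩ := Finset.exists_ne_zero_of_sum_ne_zero hS
    refine ⟨q', Finset.ne_of_mem_erase hq'mem, ?_, ?_⟩
    · intro h0; rw [h0] at hq'; simp at hq'
    · intro h0; rw [h0] at hq'; simp at hq'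
  refine ⟨h1, ?_, ?_⟩
  · -- Part 2
    -- per-qubit count
    have hA : ∀ q : Fin N,
        (Finset.univ.filter (fun p : Fin R × Fin R => cond3 (H p.1 q) (H p.2 q))).card
          = dX H q * dY H q + dY H q * dZ H q + dZ H q * dX H q := by
      intro q
      have esplit : Finset.univ.filter (fun p : Fin R × Fin R => cond3 (H p.1 q) (H p.2 q))
          = ((Finset.univ.filter (fun c => H c q = ((1 : ZMod 2), (0 : ZMod 2)))) ×ˢ
             (Finset.univ.filter (fun c => H c q = ((1 : ZMod 2), (1 : ZMod 2))))) ∪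
            (((Finset.univ.filter (fun c => H c q = ((1 : ZMod 2), (1 : ZMod 2)))) ×ˢ
             (Finset.univ.filter (fun c => H c q = ((0 : ZMod 2), (1 : ZMod 2))))) ∪
            ((Finset.univ.filter (fun c => H c q = ((0 : ZMod 2), (1 : ZMod 2)))) ×ˢ
             (Finset.univ.filter (fun c => H c q = ((1 : ZMod 2), (0 : ZMod 2)))))) := by
        ext p
        rw [Finset.mem_filter]
        simp [cond3, Finset.mem_product, Finset.mem_filter]
      rw [esplit, Finset.card_union_of_disjoint, Finset.card_union_of_disjoint]
      · simp only [Finset.card_product]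
        rw [dX, dY, dZ]
        ring
      · -- Disjoint YZ ZX
        rw [Finset.disjoint_left]
        intro p hp hp'
        simp only [Finset.mem_product, Finset.mem_filter, Finset.mem_univ, true_and] at hp hp'
        exact absurd (hp.1.symm.trans hp'.1) (by decide)
      · -- Disjoint XY (YZ ∪ ZX)
        rw [Finset.disjoint_union_right]
        constructor <;> rw [Finset.disjoint_left] <;> intro p hp hp' <;>
          simp only [Finset.mem_product, Finset.mem_filter, Finset.mem_univ, true_and] at hp hp' <;>
          exact absurd (hp.1.symm.trans hp'.1) (by decide)
    -- total count
    have hTcard : (Tset H).card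
        = ∑ q : Fin N, (dX H q * dY H q + dY H q * dZ H q + dZ H q * dX H q) := by
      rw [Finset.card_eq_sum_card_fiberwise
        (f := fun x : (Fin R × Fin R) × Fin N => x.2) (t := Finset.univ)
        (fun x _ => Finset.mem_univ _)]
      refine Finset.sum_congr rfl fun q _ => ?_
      rw [← hA q]
      have himg : (Tset H).filter (fun x => x.2 = q)
          = (Finset.univ.filter (fun p : Fin R × Fin R => cond3 (H p.1 q) (H p.2 q))).image
              (fun p => (p, q)) := by
        ext x
        simp only [Tset, Finset.mem_filter, Finset.mem_univ, true_and, Finset.mem_image]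
        constructor
        · rintro ⟨hx, rfl⟩
          exact ⟨x.1, hx, rfl⟩
        · rintro ⟨p, hp, rfl⟩
          exact ⟨hp, rfl⟩
      rw [himg, Finset.card_image_of_injective]
      intro p p' hpp'
      exact (Prod.ext_iff.mp hpp').1
    -- the injection-with-multiplicity argument
    have hTle : (Tset H).card ≤ 2 * (Cset H).card := by
      apply Finset.card_le_mul_card_image_of_maps_to (f := ffun H)
      · -- maps to
        intro x hx
        simp only [Tset, Finset.mem_filter, Finset.mem_univ, true_and] at hx
        obtain ⟨ha0, hb0, hab⟩ := cond3_nz _ _ hx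
        have hex : ∃ q', q' ≠ x.2 ∧ H x.1.1 q' ≠ 0 ∧ H x.1.2 q' ≠ 0 :=
          h1 _ _ _ (cond3_sp _ _ hx)
        have hg : gfun H x ≠ x.2 ∧ H x.1.1 (gfun H x) ≠ 0 ∧ H x.1.2 (gfun H x) ≠ 0 := by
          rw [gfun, dif_pos hex]; exact hex.choose_spec
        have hcc : x.1.1 ≠ x.1.2 := fun h => hab (by rw [h])
        simp only [Cset, Finset.mem_filter, Finset.mem_univ, true_and, ffun]
        rcases lt_or_gt_of_ne hcc with hlt | hlt <;>
          rcases lt_or_gt_of_ne hg.1 with hq | hq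
        · rw [if_pos hlt, if_neg (not_lt.mpr hq.le)]
          exact ⟨hlt, hq, hg.2.1, ha0, hg.2.2, hb0⟩
        · rw [if_pos hlt, if_pos hq]
          exact ⟨hlt, hq, ha0, hg.2.1, hb0, hg.2.2⟩
        · rw [if_neg (not_lt.mpr hlt.le), if_neg (not_lt.mpr hq.le)]
          exact ⟨hlt, hq, hg.2.2, hb0, hg.2.1, ha0⟩
        · rw [if_neg (not_lt.mpr hlt.le), if_pos hq]
          exact ⟨hlt, hq, hb0, hg.2.2, ha0, hg.2.1⟩
      · -- fibers have at most 2 elements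
        intro y hy
        have key : ∀ qv : Fin N,
            ((Tset H).filter (fun x => ffun H x = y ∧ x.2 = qv)).card ≤ 1 := by
          intro qv
          rw [Finset.card_le_one]
          intro a ha b hb
          simp only [Finset.mem_filter] at ha hb
          obtain ⟨haT, hfa, haq⟩ := ha
          obtain ⟨hbT, hfb, hbq⟩ := hb
          simp only [Tset, Finset.mem_filter, Finset.mem_univ, true_and] at haT hbT
          rw [haq] at haT
          rw [hbq] at hbT
          have h2 : a.2 = b.2 := haq.trans hbq.symm
          rcases ffun_fst H a y hfa with h1a | h1a <;>
            rcases ffun_fst H b y hfb with h1b | h1b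
          · exact Prod.ext (h1a.trans h1b.symm) h2
          · rw [h1a] at haT
            rw [h1b] at hbT
            exact absurd hbT (fun h => cond3_asymm _ _ haT h)
          · rw [h1a] at haT
            rw [h1b] at hbT
            exact absurd hbT (fun h => cond3_asymm _ _ h haT)
          · exact Prod.ext (h1a.trans h1b.symm) h2
        have hsub : (Tset H).filter (fun x => ffun H x = y)
            ⊆ ((Tset H).filter (fun x => ffun H x = y ∧ x.2 = y.2.1)) ∪
              ((Tset H).filter (fun x => ffun H x = y ∧ x.2 = y.2.2)) := by
          intro x hx
          simp only [Finset.mem_filter, Finset.mem_union] at hx ⊢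
          rcases ffun_snd H x y hx.2 with h | h
          · exact Or.inl ⟨hx.1, hx.2, h⟩
          · exact Or.inr ⟨hx.1, hx.2, h⟩
        calc ((Tset H).filter (fun x => ffun H x = y)).card
            ≤ (((Tset H).filter (fun x => ffun H x = y ∧ x.2 = y.2.1)) ∪
               ((Tset H).filter (fun x => ffun H x = y ∧ x.2 = y.2.2))).card :=
              Finset.card_le_card hsub
          _ ≤ ((Tset H).filter (fun x => ffun H x = y ∧ x.2 = y.2.1)).card +
              ((Tset H).filter (fun x => ffun H x = y ∧ x.2 = y.2.2)).card :=
              Finset.card_union_le _ _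
          _ ≤ 1 + 1 := Nat.add_le_add (key _) (key _)
          _ = 2 := rfl
    have hC : numC4 H = (Cset H).card := by
      rw [numC4, Cset]
      convert Fintype.card_subtype _ using 2
    have hnat : (∑ q : Fin N, (dX H q * dY H q + dY H q * dZ H q + dZ H q * dX H q))
        ≤ 2 * numC4 H := by
      rw [hC, ← hTcard]; exact hTle
    have hq : ((∑ q : Fin N, (dX H q * dY H q + dY H q * dZ H q + dZ H q * dX H q) : ℕ) : ℚ)
        ≤ 2 * (numC4 H : ℚ) := by exact_mod_cast hnat
    rw [ge_iff_le, show (∑ q : Fin N,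
        ((dX H q * dY H q + dY H q * dZ H q + dZ H q * dX H q : ℕ) : ℚ))
        = ((∑ q : Fin N, (dX H q * dY H q + dY H q * dZ H q + dZ H q * dX H q) : ℕ) : ℚ) by
      push_cast; ring]
    linarith
  · -- Part 3: CSS case
    intro hCSS
    have hY : ∀ q, dY H q = 0 := by
      intro q
      rw [dY, Finset.card_eq_zero, Finset.filter_eq_empty_iff]
      intro c _ h
      rcases hCSS c with h' | h'
      · have := h' q
        rw [h] at this
        exact one_ne_zero this
      · have := h' q
        rw [h] at this
        exact one_ne_zero this
    refine congrArg _ (Finset.sum_congr rfl fun q _ => ?_)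
    rw [hY q]
    simp
end

section
/- For the all-ones base matrix 1_{r×n}, the numbers of closed paths (cycle candidates) of lengths 4, 6, 8 in the corresponding complete bipartite Tanner graph are: n₄ = C(r,2)·C(n,2), n₆ = 6·C(r,3)·C(n,3), and n₈ = (1/2)C(r,2)C(n,2) + 18 C(r,3)C(n,3) + 72 C(r,4)C(n,4) + 3(C(r,2)C(n,3) + C(r,3)C(n,2)) + 6(C(r,2)C(n,4) + C(r,4)C(n,2)) + 36(C(r,3)C(n,4) + C(r,4)C(n,3)). -/
open Finset

/-- The number of closed non-backtracking walks of length `2g` in the complete bipartite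
Tanner graph of the all-ones `r×n` base matrix: cyclic sequences
`(j₁,i₁,…,j_g,i_g)` with `j_k ≠ j_{k+1}` and `i_k ≠ i_{k+1}` (indices mod `g`). -/
def numClosedPaths (r n g : ℕ) [NeZero g] : ℕ :=
  Fintype.card {p : (ZMod g → Fin n) × (ZMod g → Fin r) //
    ∀ k : ZMod g, p.1 k ≠ p.1 (k + 1) ∧ p.2 k ≠ p.2 (k + 1)}

/-- Number of proper colorings of the cycle `C_g` with `m` colors, as the count of
functions `ZMod g → Fin m` with consecutive values distinct. -/
def properCount (m g : ℕ) [NeZero g] : ℕ :=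
  Fintype.card {f : ZMod g → Fin m // ∀ k, f k ≠ f (k + 1)}

lemma numClosedPaths_eq (r n g : ℕ) [NeZero g] :
    numClosedPaths r n g = properCount n g * properCount r g := by
  have e : {p : (ZMod g → Fin n) × (ZMod g → Fin r) //
      ∀ k : ZMod g, p.1 k ≠ p.1 (k + 1) ∧ p.2 k ≠ p.2 (k + 1)} ≃
      {f : ZMod g → Fin n // ∀ k, f k ≠ f (k + 1)} ×
      {f : ZMod g → Fin r // ∀ k, f k ≠ f (k + 1)} :=
    ((Equiv.refl _).subtypeEquiv fun p => forall_and).trans Equiv.subtypeProdEquivProd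
  rw [numClosedPaths, Fintype.card_congr e]
  exact Fintype.card_prod _ _

lemma inj2 {m : ℕ} (f : ZMod 2 → Fin m) :
    (∀ k, f k ≠ f (k + 1)) ↔ Function.Injective f := by
  constructor
  · intro h a b hab
    have h0 : f 0 ≠ f 1 := by simpa using h 0
    have hc : ∀ k : ZMod 2, k = 0 ∨ k = 1 := by decide
    rcases hc a with rfl | rfl <;> rcases hc b with rfl | rfl <;> simp_all
  · intro h k
    exact h.ne (by revert k; decide)

lemma inj3 {m : ℕ} (f : ZMod 3 → Fin m) :
    (∀ k, f k ≠ f (k + 1)) ↔ Function.Injective f := by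
  constructor
  · intro h a b hab
    have h0 : f 0 ≠ f 1 := by simpa using h 0
    have h1 : f 1 ≠ f 2 := h 1
    have h2 : f 2 ≠ f 0 := h 2
    have hc : ∀ k : ZMod 3, k = 0 ∨ k = 1 ∨ k = 2 := by decide
    rcases hc a with rfl | rfl | rfl <;> rcases hc b with rfl | rfl | rfl <;> simp_all
  · intro h k
    exact h.ne (by revert k; decide)

lemma properCount_two (m : ℕ) : properCount m 2 = m.descFactorial 2 := by
  rw [properCount, Fintype.card_congr
    (((Equiv.refl _).subtypeEquiv fun f => inj2 f).trans
      (Equiv.subtypeInjectiveEquivEmbedding _ _)),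
    Fintype.card_embedding_eq]
  simp [ZMod.card]

lemma properCount_three (m : ℕ) : properCount m 3 = m.descFactorial 3 := by
  rw [properCount, Fintype.card_congr
    (((Equiv.refl _).subtypeEquiv fun f => inj3 f).trans
      (Equiv.subtypeInjectiveEquivEmbedding _ _)),
    Fintype.card_embedding_eq]
  simp [ZMod.card]

lemma zmod4_cases (k : ZMod 4) : k = 0 ∨ k = 1 ∨ k = 2 ∨ k = 3 := by revert k; decide

def quadEquiv (m : ℕ) : {f : ZMod 4 → Fin m // ∀ k, f k ≠ f (k + 1)} ≃
    {q : Fin m × Fin m × Fin m × Fin m //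
      q.1 ≠ q.2.1 ∧ q.2.1 ≠ q.2.2.1 ∧ q.2.2.1 ≠ q.2.2.2 ∧ q.2.2.2 ≠ q.1} where
  toFun f := ⟨(f.1 0, f.1 1, f.1 2, f.1 3), f.2 0, f.2 1, f.2 2, f.2 3⟩
  invFun q := ⟨fun k => if k = 0 then q.1.1 else if k = 1 then q.1.2.1
      else if k = 2 then q.1.2.2.1 else q.1.2.2.2, by
    obtain ⟨⟨a, b, c, d⟩, h1, h2, h3, h4⟩ := q
    intro k
    rcases zmod4_cases k with h | h | h | h <;> subst h
    · exact h1
    · exact h2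
    · exact h3
    · exact h4⟩
  left_inv f := by
    apply Subtype.ext
    funext k
    rcases zmod4_cases k with h | h | h | h <;> subst h <;> rfl
  right_inv q := by
    apply Subtype.ext
    obtain ⟨⟨a, b, c, d⟩, h⟩ := q
    rfl

def sigmaEquiv (m : ℕ) :
    {q : Fin m × Fin m × Fin m × Fin m //
      q.1 ≠ q.2.1 ∧ q.2.1 ≠ q.2.2.1 ∧ q.2.2.1 ≠ q.2.2.2 ∧ q.2.2.2 ≠ q.1} ≃
    Σ p : Fin m × Fin m,
      ({x : Fin m // x ≠ p.1 ∧ x ≠ p.2} × {x : Fin m // x ≠ p.1 ∧ x ≠ p.2}) where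
  toFun q := ⟨(q.1.1, q.1.2.2.1),
    ⟨⟨q.1.2.1, q.2.1.symm, q.2.2.1⟩, ⟨q.1.2.2.2, q.2.2.2.2, (q.2.2.2.1).symm⟩⟩⟩
  invFun x := ⟨(x.1.1, x.2.1.1, x.1.2, x.2.2.1),
    x.2.1.2.1.symm, x.2.1.2.2, x.2.2.2.2.symm, x.2.2.2.1⟩
  left_inv := by rintro ⟨⟨a, b, c, d⟩, h⟩; rfl
  right_inv := by rintro ⟨⟨a, c⟩, ⟨b, hb⟩, ⟨d, hd⟩⟩; rfl

lemma card_ne_ne (m : ℕ) (a c : Fin m) :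
    Fintype.card {x : Fin m // x ≠ a ∧ x ≠ c} = if a = c then m - 1 else m - 2 := by
  rw [Fintype.card_subtype]
  have h : univ.filter (fun x => x ≠ a ∧ x ≠ c) = ({a, c} : Finset (Fin m))ᶜ := by
    ext x; simp [not_or]
  rw [h, card_compl, Fintype.card_fin]
  by_cases hac : a = c
  · simp [hac]
  · rw [if_neg hac, card_insert_of_notMem (by simp [hac]), card_singleton]

lemma sum_ite_sq (m : ℕ) :
    ∑ p : Fin m × Fin m, (if p.1 = p.2 then m - 1 else m - 2) ^ 2 =
      m * ((m - 1) ^ 2 + (m - 1) * (m - 2) ^ 2) := by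
  rw [Fintype.sum_prod_type]
  have inner : ∀ a : Fin m, ∑ c : Fin m, (if a = c then m - 1 else m - 2) ^ 2 =
      (m - 1) ^ 2 + (m - 1) * (m - 2) ^ 2 := by
    intro a
    rw [← Finset.add_sum_erase _ _ (mem_univ a), if_pos rfl]
    congr 1
    rw [Finset.sum_congr rfl (fun c hc => by
      rw [if_neg (Ne.symm (Finset.ne_of_mem_erase hc))]), Finset.sum_const,
      Finset.card_erase_of_mem (mem_univ a), card_univ, Fintype.card_fin, smul_eq_mul]
  rw [Finset.sum_congr rfl fun a _ => inner a, Finset.sum_const, card_univ,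
    Fintype.card_fin, smul_eq_mul]

lemma nat_poly (m : ℕ) : m * ((m - 1) ^ 2 + (m - 1) * (m - 2) ^ 2) =
    m.descFactorial 4 + 2 * m.descFactorial 3 + m.descFactorial 2 := by
  match m with
  | 0 => rfl
  | 1 => rfl
  | 2 => rfl
  | (k + 3) =>
    simp only [Nat.descFactorial, Nat.add_sub_cancel, Nat.succ_sub_succ, Nat.sub_zero]
    ring

lemma properCount_four (m : ℕ) :
    properCount m 4 = m.descFactorial 4 + 2 * m.descFactorial 3 + m.descFactorial 2 := by
  rw [properCount, Fintype.card_congr ((quadEquiv m).trans (sigmaEquiv m)),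
    Fintype.card_sigma]
  have : ∀ p : Fin m × Fin m,
      Fintype.card ({x : Fin m // x ≠ p.1 ∧ x ≠ p.2} × {x : Fin m // x ≠ p.1 ∧ x ≠ p.2}) =
      (if p.1 = p.2 then m - 1 else m - 2) ^ 2 := by
    intro p
    rw [Fintype.card_prod, card_ne_ne, sq]
  rw [Finset.sum_congr rfl fun p _ => this p, sum_ite_sq, nat_poly]

/-- Cycle-candidate counts for the all-ones `r×n` base matrix: closed paths counted up to
the `2g` rotations and reflections. -/
theorem all_ones_cycle_candidate_counts (r n : ℕ) :
    ((numClosedPaths r n 2 : ℚ) / 4 = (r.choose 2 : ℚ) * (n.choose 2 : ℚ)) ∧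
    ((numClosedPaths r n 3 : ℚ) / 6 = 6 * (r.choose 3 : ℚ) * (n.choose 3 : ℚ)) ∧
    ((numClosedPaths r n 4 : ℚ) / 8 =
      (1 / 2) * (r.choose 2 : ℚ) * (n.choose 2 : ℚ)
      + 18 * (r.choose 3 : ℚ) * (n.choose 3 : ℚ)
      + 72 * (r.choose 4 : ℚ) * (n.choose 4 : ℚ)
      + 3 * ((r.choose 2 : ℚ) * (n.choose 3 : ℚ) + (r.choose 3 : ℚ) * (n.choose 2 : ℚ))
      + 6 * ((r.choose 2 : ℚ) * (n.choose 4 : ℚ) + (r.choose 4 : ℚ) * (n.choose 2 : ℚ))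
      + 36 * ((r.choose 3 : ℚ) * (n.choose 4 : ℚ) + (r.choose 4 : ℚ) * (n.choose 3 : ℚ))) := by
  refine ⟨?_, ?_, ?_⟩
  · rw [numClosedPaths_eq, properCount_two, properCount_two,
      Nat.descFactorial_eq_factorial_mul_choose, Nat.descFactorial_eq_factorial_mul_choose]
    push_cast
    norm_num [Nat.factorial]
    ring
  · rw [numClosedPaths_eq, properCount_three, properCount_three,
      Nat.descFactorial_eq_factorial_mul_choose, Nat.descFactorial_eq_factorial_mul_choose]
    push_cast
    norm_num [Nat.factorial]
    ring
  · rw [numClosedPaths_eq, properCount_four, properCount_four]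
    simp only [Nat.descFactorial_eq_factorial_mul_choose]
    push_cast
    norm_num [Nat.factorial]
    ring
end
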